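/- Assume condition (*): for f : x → y in D, {g : s(g)=s(f)} = Id_y∘f = f∘Id_x. Then IndP^C_{s,D}(C) = (k⊗_{kS}C)^S is an interior kC-algebra: the map τ : kC → (k⊗_{kS}C)^S given on a morphism f' of C by τ(f') = 1 ⊗ σ(f), where f ∈ Mor D is any lift with s(f) = f', is well-defined (independent of the lift, and lands in the S-fixed points) and is a unital homomorphism of k-algebras. -/

import Mathlib

open CategoryTheory

variable (k : Type) [Field k]

variable (D : Type) [SmallCategory D] [Fintype D] [DecidableEq D]
  [∀ x y : D, Fintype (x ⟶ y)] [∀ x y : D, DecidableEq (x ⟶ y)]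
variable (C : Type) [SmallCategory C] [Fintype C] [DecidableEq C]
  [∀ x y : C, Fintype (x ⟶ y)] [∀ x y : C, DecidableEq (x ⟶ y)]

/-- The set of morphisms of a category, as a sigma type. -/
abbrev Mor (C : Type) [SmallCategory C] : Type := Σ x y : C, x ⟶ y

/-- Composition of composable morphisms: `compMor g f h = g ∘ f` when `d(g) = c(f)`. -/
def compMor {C : Type} [SmallCategory C] (g f : Mor C) (h : g.1 = f.2.1) : Mor C :=
  ⟨f.1, g.2.1, f.2.2 ≫ eqToHom h.symm ≫ g.2.2⟩

/-- The action of a functor `s : D ⥤ C` on the set of morphisms. -/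
def sMor {D C : Type} [SmallCategory D] [SmallCategory C] (s : D ⥤ C) (f : Mor D) : Mor C :=
  ⟨s.obj f.1, s.obj f.2.1, s.map f.2.2⟩

/-- The category algebra `kD`, as a `k`-vector space with basis `Mor D`. -/
abbrev CatAlg (D : Type) [SmallCategory D] : Type := Mor D →₀ k

/-- Product of two basis elements of the category algebra. -/
noncomputable def catMulSingle {D : Type} [SmallCategory D] [DecidableEq D]
    (g f : Mor D) : CatAlg k D :=
  if h : g.1 = f.2.1 then Finsupp.single (compMor g f h) 1 else 0

/-- The multiplication of the category algebra, as a bilinear map. -/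
noncomputable def catMulL {D : Type} [SmallCategory D] [DecidableEq D] :
    CatAlg k D →ₗ[k] CatAlg k D →ₗ[k] CatAlg k D :=
  Finsupp.lsum k fun g => LinearMap.toSpanSingleton k _
    (Finsupp.lsum k fun f => LinearMap.toSpanSingleton k _ (catMulSingle k g f))

/-- The identity `∑_{x ∈ Ob D} 1_x` of the category algebra. -/
noncomputable def catOne (D : Type) [SmallCategory D] [Fintype D] : CatAlg k D :=
  ∑ x : D, Finsupp.single ⟨x, x, 𝟙 x⟩ 1

variable (s : D ⥤ C)

/-- `Id_x = { f ∈ Mor D ∣ s(f) = 1_{s(x)} }` (such `f` are endomorphisms of `x`, since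
`s` is injective on objects). -/
def IdC (x : D) : Set (x ⟶ x) := {f | s.map f = 𝟙 (s.obj x)}

/-- `𝒮 = { ∑_{x ∈ Ob D} f_x ∣ f_x ∈ Id_x } ⊆ kD`. -/
def SMonSet : Set (CatAlg k D) :=
  {a | ∃ F : ∀ x : D, x ⟶ x, (∀ x, F x ∈ IdC D C s x) ∧
    a = ∑ x : D, Finsupp.single ⟨x, x, F x⟩ 1}

/-- Condition (*): for every `f : x ⟶ y` in `D`, the `∼ₛ`-class of `f` equals
`Id_y ∘ f` and equals `f ∘ Id_x`. -/
def StarCond : Prop :=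
  ∀ (x y : D) (f : x ⟶ y) (g : Mor D),
    (sMor s g = sMor s ⟨x, y, f⟩ ↔ ∃ h : y ⟶ y, h ∈ IdC D C s y ∧ g = ⟨x, y, f ≫ h⟩) ∧
    (sMor s g = sMor s ⟨x, y, f⟩ ↔ ∃ h : x ⟶ x, h ∈ IdC D C s x ∧ g = ⟨x, y, h ≫ f⟩)

variable (E : Type) [Ring E] [Algebra k E] (σ : CatAlg k D →ₗ[k] E)

/-- The submodule of relations defining `k ⊗_{k𝒮} C` as a quotient of `C` (note that
`ε(s) = 1` for `s ∈ 𝒮`, so `k ⊗_{k𝒮} C ≅ C / span{σ(s)·c - c}`). -/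
def relJ : Submodule k E :=
  Submodule.span k {y : E | ∃ a ∈ SMonSet k D C s, ∃ c : E, y = σ a * c - c}

/-- `k ⊗_{k𝒮} C`, realized as the quotient `C / J`. -/
abbrev QuotQ : Type := E ⧸ relJ k D C s E σ

/-- The canonical projection `C → k ⊗_{k𝒮} C`, `c ↦ 1 ⊗ c`. -/
noncomputable def mkQ : E →ₗ[k] QuotQ k D C s E σ := (relJ k D C s E σ).mkQ

/-- The `𝒮`-fixed points of `k ⊗_{k𝒮} C` under the right action `(1 ⊗ c)·s = 1 ⊗ cσ(s)`:
`q` is fixed iff for every representative `c` of `q` and every `s ∈ 𝒮`,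
`1 ⊗ cσ(s) = q`. -/
def FixQ : Set (QuotQ k D C s E σ) :=
  {q | ∀ a ∈ SMonSet k D C s, ∀ c : E, mkQ k D C s E σ c = q →
    mkQ k D C s E σ (c * σ a) = q}

/-!
By (*), two lifts of the same morphism of `C` are `φ` and `φ ≫ h` for some `h ∈ Id_y`.
Extending `h` by identities at the other objects gives an element `a ∈ 𝒮` with `a · φ = φ ≫ h`
in `kD`, and `1 ⊗ σ(a) c = 1 ⊗ c` by the defining relations of `k ⊗_{k𝒮} C`; this is
well-definedness. Right multiplication by `∑ F_x ∈ 𝒮` turns `φ : x ⟶ y` into `F_x ≫ φ`, another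
lift of `s(φ)`, so `1 ⊗ σ(φ)` is `𝒮`-fixed. Multiplicativity and unitality come from `σ`.
-/

section CategoryAlgebra

variable {k : Type} [Field k] {D : Type} [SmallCategory D] [DecidableEq D]

@[simp]
theorem catMulL_single_single (g f : Mor D) :
    catMulL k (Finsupp.single g 1) (Finsupp.single f 1) = catMulSingle k g f := by
  simp [catMulL, LinearMap.toSpanSingleton_apply]

variable [Fintype D] (F : ∀ z : D, z ⟶ z) {x y : D} (φ : x ⟶ y)

theorem catMulL_sum_endo_single :
    catMulL k (∑ z, Finsupp.single ⟨z, z, F z⟩ 1) (Finsupp.single ⟨x, y, φ⟩ 1) =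
      Finsupp.single ⟨x, y, φ ≫ F y⟩ 1 := by
  rw [map_sum, LinearMap.sum_apply, Finset.sum_eq_single y]
  · simp [catMulSingle, compMor]
  · intro z _ hz
    simp [catMulSingle, hz]
  · simp

theorem catMulL_single_sum_endo :
    catMulL k (Finsupp.single ⟨x, y, φ⟩ 1) (∑ z, Finsupp.single ⟨z, z, F z⟩ 1) =
      Finsupp.single ⟨x, y, F x ≫ φ⟩ 1 := by
  rw [map_sum, Finset.sum_eq_single x]
  · simp [catMulSingle, compMor]
  · intro z _ hz
    simp [catMulSingle, Ne.symm hz]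
  · simp

end CategoryAlgebra

section Quotient

variable {k : Type} [Field k] {D : Type} [SmallCategory D] [Fintype D]
  {C : Type} [SmallCategory C] {s : D ⥤ C} {E : Type} [Ring E] [Algebra k E]
  {σ : CatAlg k D →ₗ[k] E}

theorem mkQ_σ_mul_of_mem_SMonSet {a : CatAlg k D} (ha : a ∈ SMonSet k D C s) (c : E) :
    mkQ k D C s E σ (σ a * c) = mkQ k D C s E σ c :=
  (Submodule.Quotient.eq _).mpr (Submodule.subset_span ⟨a, ha, c, rfl⟩)

theorem relJ_mul_mem {e : E} (he : e ∈ relJ k D C s E σ) (d : E) :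
    e * d ∈ relJ k D C s E σ := by
  induction he using Submodule.span_induction with
  | mem y hy =>
    obtain ⟨a, ha, c, rfl⟩ := hy
    exact Submodule.subset_span ⟨a, ha, c * d, by rw [sub_mul, mul_assoc]⟩
  | zero => simp
  | add y z _ _ hy hz => simpa [add_mul] using add_mem hy hz
  | smul r y _ hy => simpa [smul_mul_assoc] using Submodule.smul_mem _ r hy

theorem mkQ_mul_right_congr {c c' : E} (h : mkQ k D C s E σ c = mkQ k D C s E σ c') (d : E) :
    mkQ k D C s E σ (c * d) = mkQ k D C s E σ (c' * d) := by
  rw [mkQ, Submodule.mkQ_apply, Submodule.mkQ_apply, Submodule.Quotient.eq] at h ⊢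
  simpa [sub_mul] using relJ_mul_mem h d

end Quotient

section Induction

variable {k : Type} [Field k] {D : Type} [SmallCategory D] [Fintype D] [DecidableEq D]
  {C : Type} [SmallCategory C] {s : D ⥤ C} {E : Type} [Ring E] [Algebra k E]
  {σ : CatAlg k D →ₗ[k] E}

theorem exists_mem_SMonSet_catMulL_single {x y : D} {h : y ⟶ y} (hh : h ∈ IdC D C s y)
    (φ : x ⟶ y) :
    ∃ a ∈ SMonSet k D C s,
      catMulL k a (Finsupp.single ⟨x, y, φ⟩ 1) = Finsupp.single ⟨x, y, φ ≫ h⟩ 1 := by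
  refine ⟨_, ⟨Function.update (fun z => 𝟙 z) y h, fun z => ?_, rfl⟩, ?_⟩
  · rcases eq_or_ne z y with rfl | hz
    · simpa using hh
    · simp [Function.update_of_ne hz, IdC]
  · rw [catMulL_sum_endo_single, Function.update_self]

theorem mkQ_σ_single_eq_of_sMor_eq (hstar : StarCond D C s)
    (hσmul : ∀ a b, σ (catMulL k a b) = σ a * σ b) {f₁ f₂ : Mor D}
    (hf : sMor s f₁ = sMor s f₂) :
    mkQ k D C s E σ (σ (Finsupp.single f₁ 1)) = mkQ k D C s E σ (σ (Finsupp.single f₂ 1)) := by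
  obtain ⟨x, y, φ⟩ := f₂
  obtain ⟨h, hh, rfl⟩ := (hstar x y φ f₁).1.mp hf
  obtain ⟨a, ha, hmul⟩ := exists_mem_SMonSet_catMulL_single (k := k) hh φ
  rw [← hmul, hσmul, mkQ_σ_mul_of_mem_SMonSet ha]

theorem mkQ_σ_single_mem_FixQ (hstar : StarCond D C s)
    (hσmul : ∀ a b, σ (catMulL k a b) = σ a * σ b) (f : Mor D) :
    mkQ k D C s E σ (σ (Finsupp.single f 1)) ∈ FixQ k D C s E σ := by
  obtain ⟨x, y, φ⟩ := f
  rintro a ⟨F, hF, rfl⟩ c hc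
  have hlift : sMor s ⟨x, y, F x ≫ φ⟩ = sMor s ⟨x, y, φ⟩ := by
    have hFx : s.map (F x) = 𝟙 _ := hF x
    simp [sMor, hFx]
  rw [mkQ_mul_right_congr hc, ← hσmul, catMulL_single_sum_endo,
    mkQ_σ_single_eq_of_sMor_eq hstar hσmul hlift]

end Induction

theorem IndP_is_interior_kC_algebra (hstar : StarCond D C s)
    (hσ1 : σ (catOne k D) = 1) (hσmul : ∀ a b, σ (catMulL k a b) = σ a * σ b) :
    -- well-definedness: two lifts of the same morphism of `C` give the same element
    (∀ f₁ f₂ : Mor D, sMor s f₁ = sMor s f₂ →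
      mkQ k D C s E σ (σ (Finsupp.single f₁ 1)) = mkQ k D C s E σ (σ (Finsupp.single f₂ 1))) ∧
    -- the image lies in the `𝒮`-fixed points
    (∀ f : Mor D, mkQ k D C s E σ (σ (Finsupp.single f 1)) ∈ FixQ k D C s E σ) ∧
    -- multiplicativity: composable morphisms multiply, non-composable ones give `0`
    (∀ (g f : Mor D) (h : g.1 = f.2.1),
      mkQ k D C s E σ (σ (Finsupp.single g 1) * σ (Finsupp.single f 1)) =
        mkQ k D C s E σ (σ (Finsupp.single (compMor g f h) 1))) ∧
    (∀ g f : Mor D, g.1 ≠ f.2.1 →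
      mkQ k D C s E σ (σ (Finsupp.single g 1) * σ (Finsupp.single f 1)) = 0) ∧
    -- unitality: the identity `∑_{x'} 1_{x'}` of `kC` is sent to `1 ⊗ 1_C`
    mkQ k D C s E σ (σ (catOne k D)) = mkQ k D C s E σ 1 := by
  refine ⟨fun _ _ => mkQ_σ_single_eq_of_sMor_eq hstar hσmul, mkQ_σ_single_mem_FixQ hstar hσmul,
    fun g f h => ?_, fun g f h => ?_, by rw [hσ1]⟩
  · rw [← hσmul, catMulL_single_single, catMulSingle, dif_pos h]
  · rw [← hσmul, catMulL_single_single, catMulSingle, dif_neg h, map_zero, map_zero]
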